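/- In system D, if Γ ⊢ (a[x:=b] c₁ ... cₙ) : C and Γ ⊢ b : B (for some B), then (λx.a b c₁ ... cₙ) is typable in system D. -/
import Mathlib


/-- Untyped λ-terms in de Bruijn representation. -/
inductive Term : Type
  | var : ℕ → Term
  | lam : Term → Term
  | app : Term → Term → Term
  deriving DecidableEq

namespace Term

/-- Shift (lift) all de Bruijn indices ≥ d by one. -/
def lift (d : ℕ) : Term → Term
  | var n => var (if n < d then n else n + 1)
  | lam t => lam (lift (d + 1) t)
  | app t u => app (lift d t) (lift d u)

/-- Capture-avoiding substitution `t[k := u]` (de Bruijn style). -/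
def subst : Term → ℕ → Term → Term
  | var n, k, u => if n = k then u else var (if n < k then n else n - 1)
  | lam t, k, u => lam (subst t (k + 1) (lift 0 u))
  | app t v, k, u => app (subst t k u) (subst v k u)

/-- Swap the de Bruijn indices d and d+1 (exchange of two adjacent binders). -/
def swap (d : ℕ) : Term → Term
  | var n => var (if n = d then d + 1 else if n = d + 1 then d else n)
  | lam t => lam (swap (d + 1) t)
  | app t u => app (swap d t) (swap d u)

end Term

/-- The four reduction rules. -/
inductive Rule | beta | delta | gamma | assoc

/-- One-step reduction by a given rule (closed under congruence).
β: (λx.M N) ▷ M[x:=N];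
δ: (λy.λx.M N) ▷ λx.(λy.M N), x ∉ FV(N);
γ: (λx.M N P) ▷ (λx.(M P) N), x ∉ FV(P);
assoc: (M (λx.N P)) ▷ (λx.(M N) P), x ∉ FV(M).
Freshness conditions are realized by lifting. -/
inductive Step : Rule → Term → Term → Prop
  | beta (M N) : Step .beta (.app (.lam M) N) (Term.subst M 0 N)
  | delta (M N) : Step .delta (.app (.lam (.lam M)) N)
      (.lam (.app (.lam (Term.swap 0 M)) (Term.lift 0 N)))
  | gamma (M N P) : Step .gamma (.app (.app (.lam M) N) P)
      (.app (.lam (.app M (Term.lift 0 P))) N)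
  | assoc (M N P) : Step .assoc (.app M (.app (.lam N) P))
      (.app (.lam (.app (Term.lift 0 M) N)) P)
  | appCongL {r t t'} (u) : Step r t t' → Step r (.app t u) (.app t' u)
  | appCongR {r u u'} (t) : Step r u u' → Step r (.app t u) (.app t u')
  | lamCong {r t t'} : Step r t t' → Step r (.lam t) (.lam t')

/-- One-step reduction by the union of the four rules. -/
def StepAll (t t' : Term) : Prop := ∃ r, Step r t t'

/-- Strong normalization for the union of β, δ, γ, assoc. -/
def SN (t : Term) : Prop := Acc (fun a b => StepAll b a) t

/-- Strong normalization for β alone. -/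
def SNbeta (t : Term) : Prop := Acc (fun a b => Step .beta b a) t

mutual
/-- Simple types: atoms and arrows with simple codomain. -/
inductive STy : Type
  | atom : ℕ → STy
  | arrow : Ty → STy → STy
/-- Types of system D: intersections of simple types. -/
inductive Ty : Type
  | simple : STy → Ty
  | inter : STy → Ty → Ty
end

/-- Typing judgment of system D (contexts are lists of types, de Bruijn). -/
inductive Typing : List Ty → Term → Ty → Prop
  | var {Γ n A} : Γ[n]? = some A → Typing Γ (.var n) A
  | app {Γ M N A B} : Typing Γ M (.simple (.arrow A B)) → Typing Γ N A →
      Typing Γ (.app M N) (.simple B)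
  | lam {Γ M A B} : Typing (A :: Γ) M (.simple B) →
      Typing Γ (.lam M) (.simple (.arrow A B))
  | interI {Γ M A B} : Typing Γ M (.simple A) → Typing Γ M B →
      Typing Γ M (.inter A B)
  | interE1 {Γ M A B} : Typing Γ M (.inter A B) → Typing Γ M (.simple A)
  | interE2 {Γ M A B} : Typing Γ M (.inter A B) → Typing Γ M B

/-- A term is typable in system D. -/
def Typable (t : Term) : Prop := ∃ Γ A, Typing Γ t A

/-- (H M₁ ... Mₙ). -/
def appList (H : Term) (Ms : List Term) : Term := Ms.foldl .app H

/-- Intersection of two D-types. -/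
def Ty.interTy : Ty → Ty → Ty
  | .simple s, t => .inter s t
  | .inter s u, t => .inter s (u.interTy t)

lemma interTy_intro : ∀ (A : Ty) {Γ M B}, Typing Γ M A → Typing Γ M B →
    Typing Γ M (A.interTy B)
  | .simple _, _, _, _, h1, h2 => .interI h1 h2
  | .inter _ u, _, _, _, h1, h2 =>
      .interI h1.interE1 (interTy_intro u h1.interE2 h2)

lemma interTy_elim1 : ∀ (A : Ty) {Γ M B}, Typing Γ M (A.interTy B) → Typing Γ M A
  | .simple _, _, _, _, h => h.interE1
  | .inter _ u, _, _, _, h => .interI h.interE1 (interTy_elim1 u h.interE2)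

lemma interTy_elim2 : ∀ (A : Ty) {Γ M B}, Typing Γ M (A.interTy B) → Typing Γ M B
  | .simple _, _, _, _, h => h.interE2
  | .inter _ u, _, _, _, h => interTy_elim2 u h.interE2

/-- Iterated lifting by k. -/
def liftN : ℕ → Term → Term
  | 0, b => b
  | k + 1, b => Term.lift 0 (liftN k b)

lemma get_append_lt {α} {Δ Γ : List α} {n} (h : n < Δ.length) :
    (Δ ++ Γ)[n]? = Δ[n]? := by
  rw [List.getElem?_append]; exact if_pos h

lemma get_append_ge {α} {Δ Γ : List α} {n} (h : Δ.length ≤ n) :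
    (Δ ++ Γ)[n]? = Γ[n - Δ.length]? := by
  rw [List.getElem?_append]; exact if_neg (by omega)

/-- Replacing the type of a variable in the context by a "stronger" type. -/
lemma ctx_replace : ∀ {Γ' t C}, Typing Γ' t C → ∀ Δ A A' Γ, Γ' = Δ ++ A :: Γ →
    (∀ Γ₀ M₀, Typing Γ₀ M₀ A' → Typing Γ₀ M₀ A) → Typing (Δ ++ A' :: Γ) t C := by
  intro Γ' t C h
  induction h with
  | @var _ n D hl =>
    intro Δ A A' Γ hΓ hsub
    subst hΓ
    rcases lt_trichotomy n Δ.length with hn | hn | hn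
    · exact .var (by rw [get_append_lt hn] at hl ⊢; exact hl)
    · subst hn
      rw [get_append_ge le_rfl, Nat.sub_self] at hl
      simp only [List.getElem?_cons_zero, Option.some.injEq] at hl
      subst hl
      exact hsub _ _ (.var (by rw [get_append_ge le_rfl, Nat.sub_self]; simp))
    · refine .var ?_
      rw [get_append_ge hn.le] at hl ⊢
      obtain ⟨m, hm⟩ : ∃ m, n - Δ.length = m + 1 :=
        ⟨n - Δ.length - 1, by omega⟩
      rw [hm] at hl ⊢
      exact hl
  | app hM hN ihM ihN =>
    intro Δ A A' Γ hΓ hsub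
    exact .app (ihM Δ A A' Γ hΓ hsub) (ihN Δ A A' Γ hΓ hsub)
  | @lam _ _ E _ hM ihM =>
    intro Δ A A' Γ hΓ hsub
    exact .lam (ihM (E :: Δ) A A' Γ (by simp [hΓ]) hsub)
  | interI h1 h2 ih1 ih2 =>
    intro Δ A A' Γ hΓ hsub
    exact .interI (ih1 Δ A A' Γ hΓ hsub) (ih2 Δ A A' Γ hΓ hsub)
  | interE1 h ih =>
    intro Δ A A' Γ hΓ hsub
    exact (ih Δ A A' Γ hΓ hsub).interE1
  | interE2 h ih =>
    intro Δ A A' Γ hΓ hsub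
    exact (ih Δ A A' Γ hΓ hsub).interE2

/-- Strengthening: removing an unused context entry under a lift. -/
lemma strengthen : ∀ {Γ' t C}, Typing Γ' t C → ∀ Δ E Γ M, Γ' = Δ ++ E :: Γ →
    t = Term.lift Δ.length M → Typing (Δ ++ Γ) M C := by
  intro Γ' t C h
  induction h with
  | @var _ m D hl =>
    intro Δ E Γ M hΓ ht
    subst hΓ
    cases M with
    | lam _ => simp [Term.lift] at ht
    | app _ _ => simp [Term.lift] at ht
    | var n =>
      simp only [Term.lift, Term.var.injEq] at ht
      refine .var ?_
      by_cases hn : n < Δ.length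
      · rw [if_pos hn] at ht
        subst ht
        rw [get_append_lt hn] at hl ⊢
        exact hl
      · rw [if_neg hn] at ht
        subst ht
        rw [get_append_ge (by omega)] at hl
        rw [get_append_ge (by omega)]
        obtain ⟨m, hm⟩ : ∃ m, n + 1 - Δ.length = m + 1 := ⟨n - Δ.length, by omega⟩
        rw [hm] at hl
        simp only [List.getElem?_cons_succ] at hl
        have : n - Δ.length = m := by omega
        rw [this]
        exact hl
  | app hM hN ihM ihN =>
    intro Δ E Γ M hΓ ht
    cases M with
    | var _ => simp [Term.lift] at ht
    | lam _ => simp [Term.lift] at ht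
    | app M1 M2 =>
      simp only [Term.lift, Term.app.injEq] at ht
      exact .app (ihM Δ E Γ M1 hΓ ht.1) (ihN Δ E Γ M2 hΓ ht.2)
  | @lam _ _ A _ hM ihM =>
    intro Δ E Γ M hΓ ht
    cases M with
    | var _ => simp [Term.lift] at ht
    | app _ _ => simp [Term.lift] at ht
    | lam M' =>
      simp only [Term.lift, Term.lam.injEq] at ht
      exact .lam (ihM (A :: Δ) E Γ M' (by simp [hΓ]) (by simp [ht]))
  | interI h1 h2 ih1 ih2 =>
    intro Δ E Γ M hΓ ht
    exact .interI (ih1 Δ E Γ M hΓ ht) (ih2 Δ E Γ M hΓ ht)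
  | interE1 h ih =>
    intro Δ E Γ M hΓ ht
    exact (ih Δ E Γ M hΓ ht).interE1
  | interE2 h ih =>
    intro Δ E Γ M hΓ ht
    exact (ih Δ E Γ M hΓ ht).interE2

/-- Iterated strengthening. -/
lemma strengthenN : ∀ (Δ : List Ty) {Γ b C}, Typing (Δ ++ Γ) (liftN Δ.length b) C →
    Typing Γ b C
  | [], _, _, _, h => h
  | E :: Δ, Γ, b, C, h =>
    strengthenN Δ (strengthen h [] E (Δ ++ Γ) (liftN Δ.length b) rfl rfl)

/-- The uniform case `a = var k` of anti-substitution. -/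
lemma var_case {Δ Γ : List Ty} {b : Term} {C : Ty}
    (h : Typing (Δ ++ Γ) (liftN Δ.length b) C) :
    ∃ A, Typing (Δ ++ A :: Γ) (.var Δ.length) C ∧ Typing Γ b A :=
  ⟨C, .var (by rw [get_append_ge le_rfl, Nat.sub_self]; simp),
    strengthenN Δ h⟩

/-- Anti-substitution for system D. -/
lemma anti_subst : ∀ {Γ' t C}, Typing Γ' t C → ∀ Δ Γ a b B, Γ' = Δ ++ Γ →
    t = Term.subst a Δ.length (liftN Δ.length b) → Typing Γ b B →
    ∃ A, Typing (Δ ++ A :: Γ) a C ∧ Typing Γ b A := by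
  intro Γ' t C h
  induction h with
  | @var _ m D hl =>
    intro Δ Γ a b B hΓ ht hb
    subst hΓ
    cases a with
    | lam _ => simp [Term.subst] at ht
    | app _ _ => simp [Term.subst] at ht
    | var n =>
      by_cases hk : n = Δ.length
      · subst hk
        rw [Term.subst, if_pos rfl] at ht
        exact var_case (ht ▸ Typing.var hl)
      · rw [Term.subst, if_neg hk] at ht
        refine ⟨B, .var ?_, hb⟩
        simp only [Term.var.injEq] at ht
        by_cases hn : n < Δ.length
        · rw [if_pos hn] at ht; subst ht
          rw [get_append_lt hn] at hl ⊢
          exact hl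
        · rw [if_neg hn] at ht; subst ht
          rw [get_append_ge (by omega)] at hl
          rw [get_append_ge (by omega)]
          obtain ⟨m, hm⟩ : ∃ m, n - Δ.length = m + 1 := ⟨n - Δ.length - 1, by omega⟩
          rw [hm]
          simp only [List.getElem?_cons_succ]
          have : n - 1 - Δ.length = m := by omega
          rw [this] at hl
          exact hl
  | @app _ M N A' B' hM hN ihM ihN =>
    intro Δ Γ a b B hΓ ht hb
    cases a with
    | lam _ => simp [Term.subst] at ht
    | var n =>
      by_cases hk : n = Δ.length
      · subst hk
        rw [Term.subst, if_pos rfl] at ht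
        subst hΓ
        exact var_case (ht ▸ Typing.app hM hN)
      · rw [Term.subst, if_neg hk] at ht; simp at ht
    | app a1 a2 =>
      simp only [Term.subst, Term.app.injEq] at ht
      obtain ⟨A1, h1, hb1⟩ := ihM Δ Γ a1 b B hΓ ht.1 hb
      obtain ⟨A2, h2, hb2⟩ := ihN Δ Γ a2 b B hΓ ht.2 hb
      refine ⟨A1.interTy A2, .app (A := A') ?_ ?_, interTy_intro A1 hb1 hb2⟩
      · exact ctx_replace h1 Δ A1 (A1.interTy A2) Γ rfl
          (fun _ _ h => interTy_elim1 A1 h)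
      · exact ctx_replace h2 Δ A2 (A1.interTy A2) Γ rfl
          (fun _ _ h => interTy_elim2 A1 h)
  | @lam _ M A' B' hM ihM =>
    intro Δ Γ a b B hΓ ht hb
    cases a with
    | app _ _ => simp [Term.subst] at ht
    | var n =>
      by_cases hk : n = Δ.length
      · subst hk
        rw [Term.subst, if_pos rfl] at ht
        subst hΓ
        exact var_case (ht ▸ Typing.lam hM)
      · rw [Term.subst, if_neg hk] at ht; simp at ht
    | lam a' =>
      simp only [Term.subst, Term.lam.injEq] at ht
      obtain ⟨A, h1, hb1⟩ := ihM (A' :: Δ) Γ a' b B (by simp [hΓ]) (by simp [ht, liftN]) hb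
      exact ⟨A, .lam h1, hb1⟩
  | interI h1 h2 ih1 ih2 =>
    intro Δ Γ a b B hΓ ht hb
    obtain ⟨A1, g1, gb1⟩ := ih1 Δ Γ a b B hΓ ht hb
    obtain ⟨A2, g2, gb2⟩ := ih2 Δ Γ a b B hΓ ht hb
    refine ⟨A1.interTy A2, .interI ?_ ?_, interTy_intro A1 gb1 gb2⟩
    · exact ctx_replace g1 Δ A1 (A1.interTy A2) Γ rfl (fun _ _ h => interTy_elim1 A1 h)
    · exact ctx_replace g2 Δ A2 (A1.interTy A2) Γ rfl (fun _ _ h => interTy_elim2 A1 h)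
  | interE1 h ih =>
    intro Δ Γ a b B hΓ ht hb
    obtain ⟨A, g, gb⟩ := ih Δ Γ a b B hΓ ht hb
    exact ⟨A, g.interE1, gb⟩
  | interE2 h ih =>
    intro Δ Γ a b B hΓ ht hb
    obtain ⟨A, g, gb⟩ := ih Δ Γ a b B hΓ ht hb
    exact ⟨A, g.interE2, gb⟩

/-- From a typing of `a` with `x : A` and `b : A`, type the redex `(λx.a) b`. -/
lemma app_lam : ∀ (C : Ty) {Γ a b A}, Typing (A :: Γ) a C → Typing Γ b A →
    Typing Γ (.app (.lam a) b) C
  | .simple _, _, _, _, _, h, hb => .app (.lam h) hb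
  | .inter _ t, _, _, _, _, h, hb =>
      .interI (.app (.lam h.interE1) hb) (app_lam t h.interE2 hb)

/-- `(λx.a) b` has every type of `a[x:=b]`. -/
lemma expand {Γ a b B C} (h : Typing Γ (Term.subst a 0 b) C) (hb : Typing Γ b B) :
    Typing Γ (.app (.lam a) b) C := by
  obtain ⟨A, h1, h2⟩ := anti_subst h [] Γ a b B rfl rfl hb
  exact app_lam C h1 h2

/-- Replacing the head of an application. -/
lemma head_repl : ∀ {Γ t C}, Typing Γ t C → ∀ H H' c, t = .app H c →
    (∀ D, Typing Γ H D → Typing Γ H' D) → Typing Γ (.app H' c) C := by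
  intro Γ t C h
  induction h with
  | var hl => intro H H' c ht _; simp at ht
  | lam hM ihM => intro H H' c ht _; simp at ht
  | app hM hN ihM ihN =>
    intro H H' c ht hr
    injection ht with e1 e2
    subst e1; subst e2
    exact .app (hr _ hM) hN
  | interI h1 h2 ih1 ih2 =>
    intro H H' c ht hr
    exact .interI (ih1 H H' c ht hr) (ih2 H H' c ht hr)
  | interE1 h ih =>
    intro H H' c ht hr
    exact (ih H H' c ht hr).interE1
  | interE2 h ih =>
    intro H H' c ht hr
    exact (ih H H' c ht hr).interE2

/-- Head replacement through an application spine. -/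
lemma appList_repl : ∀ (cs : List Term) {Γ H H' C},
    (∀ D, Typing Γ H D → Typing Γ H' D) →
    Typing Γ (appList H cs) C → Typing Γ (appList H' cs) C
  | [], _, _, _, C, hr, h => hr C h
  | c :: cs, Γ, H, H', C, hr, h =>
    appList_repl cs (fun D hd => head_repl hd H H' c rfl hr) h

/-- If Γ ⊢ (a[x:=b] c₁ ... cₙ) : C and Γ ⊢ b : B, then (λx.a b c₁ ... cₙ)
is typable in system D. -/
theorem typable_redex (Γ : List Ty) (a b : Term) (cs : List Term) (C B : Ty)
    (h1 : Typing Γ (appList (Term.subst a 0 b) cs) C) (h2 : Typing Γ b B) :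
    ∃ A, Typing Γ (appList (.app (.lam a) b) cs) A :=
  ⟨C, appList_repl cs (fun _ hd => expand hd h2) h1⟩
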